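/- Assume ρ and a k-bilinear H^R-balanced map σ:H×H→A satisfy conditions (1)–(10). Let ∇ρ:A⊗H→A⊗H be ∇ρ(a⊗h):=a(h⁽¹⁾·1_A)⊗h⁽²⁾, let A×H:=im(∇ρ) carry the weak crossed product structure with product (a×h)(b×k):=∇ρ(a(h⁽¹⁾·b)ς(h⁽²⁾⊗k⁽¹⁾)⊗h⁽³⁾k⁽²⁾) (where ς(h⊗k):=σ(h,k) and a×h:=∇ρ(a⊗h)) and unit ∇ρ(1_A⊗1). Let N ⊆ A⊗H be the span of the elements a(l·1_A)⊗h − a⊗lh (a∈A, l∈H^L, h∈H), let Q:=(A⊗H)/N and π:A⊗H→Q the projection. Then the restriction ψ of π to A×H is a k-linear bijection from A×H onto Q satisfying ψ(∇ρ(1_A⊗1)) = π(1_A⊗1) and ψ((a×h)(b×k)) = π(a(h⁽¹⁾·b)σ(h⁽²⁾,k⁽¹⁾)⊗h⁽³⁾k⁽²⁾) for all a,b∈A, h,k∈H; moreover ψ is left A-linear (ψ(∇ρ(ba⊗h)) equals the class of ba(h⁽¹⁾·1_A)⊗h⁽²⁾) and right H-colinear (applying π⊗id to a(h⁽¹⁾·1_A)⊗h⁽²⁾⊗h⁽³⁾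 corresponds under ψ to the comodule structure a×h⁽¹⁾⊗h⁽²⁾ of A×H). -/
import Mathlib


open scoped TensorProduct

/-- The data of a weak bialgebra structure (together with an antipode and its
inverse) on a `k`-algebra `H`: a comultiplication `Δ`, a counit `ε`, an
antipode `S` and its inverse `Sinv`. -/
structure WeakHopfData (k H : Type*) [Field k] [Ring H] [Algebra k H] where
  Δ : H →ₗ[k] H ⊗[k] H
  ε : H →ₗ[k] k
  S : H →ₗ[k] H
  Sinv : H →ₗ[k] H

section

variable {k H A : Type*} [Field k] [Ring H] [Algebra k H] [Ring A] [Algebra k A]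

/-- `Π^L(h) = ε(1⁽¹⁾h)1⁽²⁾`. -/
noncomputable def piL (W : WeakHopfData k H) (h : H) : H :=
  (TensorProduct.lid k H) ((LinearMap.rTensor H (W.ε ∘ₗ LinearMap.mulRight k h)) (W.Δ 1))

/-- `Π^R(h) = 1⁽¹⁾ε(h1⁽²⁾)`. -/
noncomputable def piR (W : WeakHopfData k H) (h : H) : H :=
  (TensorProduct.rid k H) ((LinearMap.lTensor H (W.ε ∘ₗ LinearMap.mulLeft k h)) (W.Δ 1))

/-- `H^L = im(Π^L)`. -/
def HL (W : WeakHopfData k H) : Set H := Set.range (piL W)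

/-- `H^R = im(Π^R)`. -/
def HR (W : WeakHopfData k H) : Set H := Set.range (piR W)

/-- The axioms of a weak Hopf algebra with bijective antipode, where Sweedler
sums are expressed via arbitrary finite representations of the comultiplication. -/
structure IsWeakHopf (W : WeakHopfData k H) : Prop where
  coassoc : ∀ h : H,
    (TensorProduct.assoc k H H H) ((LinearMap.rTensor H W.Δ) (W.Δ h)) =
      (LinearMap.lTensor H W.Δ) (W.Δ h)
  counit_left : ∀ h : H, (TensorProduct.lid k H) ((LinearMap.rTensor H W.ε) (W.Δ h)) = h
  counit_right : ∀ h : H, (TensorProduct.rid k H) ((LinearMap.lTensor H W.ε) (W.Δ h)) = h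
  comul_mul : ∀ h l : H, W.Δ (h * l) = W.Δ h * W.Δ l
  weak_comul_one₁ : (LinearMap.lTensor H W.Δ) (W.Δ 1) =
    (TensorProduct.assoc k H H H) (W.Δ 1 ⊗ₜ[k] (1 : H)) * ((1 : H) ⊗ₜ[k] W.Δ 1)
  weak_comul_one₂ : (LinearMap.lTensor H W.Δ) (W.Δ 1) =
    ((1 : H) ⊗ₜ[k] W.Δ 1) * (TensorProduct.assoc k H H H) (W.Δ 1 ⊗ₜ[k] (1 : H))
  weak_counit : ∀ h l m : H, ∀ (n : ℕ) (x y : Fin n → H),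
    W.Δ l = ∑ i, x i ⊗ₜ[k] y i →
      W.ε (h * l * m) = ∑ i, W.ε (h * x i) * W.ε (y i * m) ∧
      W.ε (h * l * m) = ∑ i, W.ε (h * y i) * W.ε (x i * m)
  antipode_left : ∀ h : H, ∀ (n : ℕ) (x y : Fin n → H),
    W.Δ h = ∑ i, x i ⊗ₜ[k] y i → ∑ i, x i * W.S (y i) = piL W h
  antipode_right : ∀ h : H, ∀ (n : ℕ) (x y : Fin n → H),
    W.Δ h = ∑ i, x i ⊗ₜ[k] y i → ∑ i, W.S (x i) * y i = piR W h
  antipode_mid : ∀ h : H, ∀ (n : ℕ) (x y : Fin n → H),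
    W.Δ h = ∑ i, x i ⊗ₜ[k] y i →
      ∀ (m : Fin n → ℕ) (u v : (i : Fin n) → Fin (m i) → H),
        (∀ i, W.Δ (y i) = ∑ j, u i j ⊗ₜ[k] v i j) →
          ∑ i, ∑ j, W.S (x i) * u i j * W.S (v i j) = W.S h
  S_Sinv : ∀ h : H, W.S (W.Sinv h) = h
  Sinv_S : ∀ h : H, W.Sinv (W.S h) = h

/-- Condition (1): `h·1_A = Π^L(h)·1_A`. -/
def cond1 (W : WeakHopfData k H) (ρ : H →ₗ[k] A →ₗ[k] A) : Prop :=
  ∀ h : H, ρ h 1 = ρ (piL W h) 1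

/-- Condition (2): `h·(aa') = (h⁽¹⁾·a)(h⁽²⁾·a')`. -/
def cond2 (W : WeakHopfData k H) (ρ : H →ₗ[k] A →ₗ[k] A) : Prop :=
  ∀ (h : H) (a a' : A) (n : ℕ) (x y : Fin n → H),
    W.Δ h = ∑ i, x i ⊗ₜ[k] y i → ρ h (a * a') = ∑ i, ρ (x i) a * ρ (y i) a'

/-- Condition (3): `S⁻¹(l)h·a = (h·a)(l·1_A)` and `lh·a = (l·1_A)(h·a)` for `l ∈ H^L`. -/
def cond3 (W : WeakHopfData k H) (ρ : H →ₗ[k] A →ₗ[k] A) : Prop :=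
  ∀ (h : H) (a : A), ∀ l ∈ HL W,
    ρ (W.Sinv l * h) a = ρ h a * ρ l 1 ∧ ρ (l * h) a = ρ l 1 * ρ h a

/-- Condition (4): `1·a = a`. -/
def cond4 (ρ : H →ₗ[k] A →ₗ[k] A) : Prop := ∀ a : A, ρ 1 a = a

/-- Condition (5). -/
def cond5 (W : WeakHopfData k H) (ρ : H →ₗ[k] A →ₗ[k] A) (σ : H → H → A) : Prop :=
  ∀ (h g : H), ∀ l ∈ HL W,
    σ (l * h) g = ρ l 1 * σ h g ∧ σ (W.Sinv l * h) g = σ h g * ρ l 1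

/-- Condition (6): `(h⁽¹⁾·(l·1_A))σ(h⁽²⁾,k) = σ(h,lk)` for `l ∈ H^L`. -/
def cond6 (W : WeakHopfData k H) (ρ : H →ₗ[k] A →ₗ[k] A) (σ : H → H → A) : Prop :=
  ∀ (h g : H), ∀ l ∈ HL W, ∀ (n : ℕ) (x y : Fin n → H),
    W.Δ h = ∑ i, x i ⊗ₜ[k] y i →
      ∑ i, ρ (x i) (ρ l 1) * σ (y i) g = σ h (l * g)

/-- Condition (7): `σ(1,h) = σ(h,1) = h·1_A`. -/
def cond7 (ρ : H →ₗ[k] A →ₗ[k] A) (σ : H → H → A) : Prop :=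
  ∀ h : H, σ 1 h = ρ h 1 ∧ σ h 1 = ρ h 1

/-- Condition (8), the cocycle condition. -/
def cond8 (W : WeakHopfData k H) (ρ : H →ₗ[k] A →ₗ[k] A) (σ : H → H → A) : Prop :=
  ∀ (h g m : H) (n₁ : ℕ) (x₁ y₁ : Fin n₁ → H) (n₂ : ℕ) (x₂ y₂ : Fin n₂ → H)
    (n₃ : ℕ) (x₃ y₃ : Fin n₃ → H),
    W.Δ h = ∑ i, x₁ i ⊗ₜ[k] y₁ i → W.Δ g = ∑ i, x₂ i ⊗ₜ[k] y₂ i →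
    W.Δ m = ∑ i, x₃ i ⊗ₜ[k] y₃ i →
      ∑ i, ∑ j, ∑ p, ρ (x₁ i) (σ (x₂ j) (x₃ p)) * σ (y₁ i) (y₂ j * y₃ p) =
        ∑ i, ∑ j, σ (x₁ i) (x₂ j) * σ (y₁ i * y₂ j) m

/-- Condition (9), the twisted module condition. -/
def cond9 (W : WeakHopfData k H) (ρ : H →ₗ[k] A →ₗ[k] A) (σ : H → H → A) : Prop :=
  ∀ (h g : H) (a : A) (n : ℕ) (x y : Fin n → H) (m : ℕ) (u v : Fin m → H),
    W.Δ h = ∑ i, x i ⊗ₜ[k] y i → W.Δ g = ∑ j, u j ⊗ₜ[k] v j →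
      ∑ i, ∑ j, ρ (x i) (ρ (u j) a) * σ (y i) (v j) =
        ∑ i, ∑ j, σ (x i) (u j) * ρ (y i * v j) a

/-- Condition (10): `h·(l·1_A) = hl·1_A` for `l ∈ H^L`. -/
def cond10 (W : WeakHopfData k H) (ρ : H →ₗ[k] A →ₗ[k] A) : Prop :=
  ∀ h : H, ∀ l ∈ HL W, ρ h (ρ l 1) = ρ (h * l) 1

/-- Condition (11): `h·(l·1_A) = hl·1_A` for all `h, l ∈ H`. -/
def cond11 (ρ : H →ₗ[k] A →ₗ[k] A) : Prop :=
  ∀ h l : H, ρ h (ρ l 1) = ρ (h * l) 1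

/-- Condition (12): `σ(h,l) = σ(hl,1)` for `l ∈ H^L`. -/
def cond12 (W : WeakHopfData k H) (σ : H → H → A) : Prop :=
  ∀ h : H, ∀ l ∈ HL W, σ h l = σ (h * l) 1

/-- Condition (13). -/
def cond13 (W : WeakHopfData k H) (ρ : H →ₗ[k] A →ₗ[k] A) (σbar : H → H → A) : Prop :=
  ∀ (h g : H) (n : ℕ) (x y : Fin n → H) (m : ℕ) (u v : Fin m → H),
    W.Δ h = ∑ i, x i ⊗ₜ[k] y i → W.Δ g = ∑ j, u j ⊗ₜ[k] v j →
      σbar h g = ∑ i, ∑ j, ρ (x i * u j) 1 * σbar (y i) (v j)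

/-- Condition (14). -/
def cond14 (W : WeakHopfData k H) (ρ : H →ₗ[k] A →ₗ[k] A) (σbar : H → H → A) : Prop :=
  ∀ (h g : H), ∀ l ∈ HL W,
    σbar (l * h) g = ρ l 1 * σbar h g ∧ σbar (W.Sinv l * h) g = σbar h g * ρ l 1

/-- Condition (15). -/
def cond15 (W : WeakHopfData k H) (ρ : H →ₗ[k] A →ₗ[k] A) (σbar : H → H → A) : Prop :=
  ∀ (h g : H), ∀ l ∈ HL W, ∀ (n : ℕ) (x y : Fin n → H),
    W.Δ h = ∑ i, x i ⊗ₜ[k] y i →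
      ∑ i, σbar (x i) g * ρ (y i) (ρ l 1) = σbar h (W.Sinv l * g)

/-- Condition (16). -/
def cond16 (W : WeakHopfData k H) (ρ : H →ₗ[k] A →ₗ[k] A) (σ σbar : H → H → A) : Prop :=
  ∀ (h g : H) (n : ℕ) (x y : Fin n → H) (m : ℕ) (u v : Fin m → H),
    W.Δ h = ∑ i, x i ⊗ₜ[k] y i → W.Δ g = ∑ j, u j ⊗ₜ[k] v j →
      (∑ i, ∑ j, σ (x i) (u j) * σbar (y i) (v j) = ρ h (ρ g 1)) ∧
      (∑ i, ∑ j, σbar (x i) (u j) * σ (y i) (v j) = ρ (h * g) 1)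

/-- Condition (17), the cocycle condition for `ς : H ⊗ H → A`. -/
def cond17 (W : WeakHopfData k H) (ρ : H →ₗ[k] A →ₗ[k] A) (ς : H ⊗[k] H → A) : Prop :=
  ∀ (h g m : H) (n₁ : ℕ) (x₁ y₁ : Fin n₁ → H) (n₂ : ℕ) (x₂ y₂ : Fin n₂ → H)
    (n₃ : ℕ) (x₃ y₃ : Fin n₃ → H),
    W.Δ h = ∑ i, x₁ i ⊗ₜ[k] y₁ i → W.Δ g = ∑ i, x₂ i ⊗ₜ[k] y₂ i →
    W.Δ m = ∑ i, x₃ i ⊗ₜ[k] y₃ i →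
      ∑ i, ∑ j, ∑ p, ρ (x₁ i) (ς (x₂ j ⊗ₜ[k] x₃ p)) * ς (y₁ i ⊗ₜ[k] (y₂ j * y₃ p)) =
        ∑ i, ∑ j, ς (x₁ i ⊗ₜ[k] x₂ j) * ς ((y₁ i * y₂ j) ⊗ₜ[k] m)

/-- Condition (18), the twisted module condition for `ς : H ⊗ H → A`. -/
def cond18 (W : WeakHopfData k H) (ρ : H →ₗ[k] A →ₗ[k] A) (ς : H ⊗[k] H → A) : Prop :=
  ∀ (h g : H) (a : A) (n : ℕ) (x y : Fin n → H) (m : ℕ) (u v : Fin m → H),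
    W.Δ h = ∑ i, x i ⊗ₜ[k] y i → W.Δ g = ∑ j, u j ⊗ₜ[k] v j →
      ∑ i, ∑ j, ρ (x i) (ρ (u j) a) * ς (y i ⊗ₜ[k] v j) =
        ∑ i, ∑ j, ς (x i ⊗ₜ[k] u j) * ρ (y i * v j) a

/-- Condition (19). -/
def cond19 (W : WeakHopfData k H) (ρ : H →ₗ[k] A →ₗ[k] A) (ς : H ⊗[k] H → A) : Prop :=
  ∀ (h g : H) (n : ℕ) (x y : Fin n → H) (m : ℕ) (u v : Fin m → H),
    W.Δ h = ∑ i, x i ⊗ₜ[k] y i → W.Δ g = ∑ j, u j ⊗ₜ[k] v j →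
      ς (h ⊗ₜ[k] g) = ∑ i, ∑ j, ς (x i ⊗ₜ[k] u j) * ρ (y i * v j) 1

/-- Condition (20). -/
def cond20 (W : WeakHopfData k H) (ρ : H →ₗ[k] A →ₗ[k] A) (ς : H ⊗[k] H → A) : Prop :=
  ∀ (h : H) (n : ℕ) (x y : Fin n → H) (m : ℕ) (u v : Fin m → H),
    W.Δ h = ∑ i, x i ⊗ₜ[k] y i → W.Δ 1 = ∑ j, u j ⊗ₜ[k] v j →
      ρ h 1 = ∑ i, ∑ j, ρ (x i) (ρ (u j) 1) * ς (y i ⊗ₜ[k] v j)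

/-- Condition (21). -/
def cond21 (W : WeakHopfData k H) (ρ : H →ₗ[k] A →ₗ[k] A) (ς : H ⊗[k] H → A) : Prop :=
  ∀ (h : H) (m : ℕ) (u v : Fin m → H),
    W.Δ 1 = ∑ j, u j ⊗ₜ[k] v j →
      ρ h 1 = ∑ j, ρ (u j) 1 * ς (v j ⊗ₜ[k] h)

/-- Condition (22): `a(1⁽¹⁾·1_A) ⊗ 1⁽²⁾ = (1⁽¹⁾·a) ⊗ 1⁽²⁾` in `A ⊗ H`. -/
def cond22 (W : WeakHopfData k H) (ρ : H →ₗ[k] A →ₗ[k] A) : Prop :=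
  ∀ (a : A) (m : ℕ) (u v : Fin m → H),
    W.Δ 1 = ∑ j, u j ⊗ₜ[k] v j →
      (∑ j, (a * ρ (u j) 1) ⊗ₜ[k] v j) = ∑ j, (ρ (u j) a) ⊗ₜ[k] v j

/-- Condition (23). -/
def cond23 (W : WeakHopfData k H) (ρ : H →ₗ[k] A →ₗ[k] A) (ςbar : H ⊗[k] H → A) : Prop :=
  ∀ (h g : H) (n : ℕ) (x y : Fin n → H) (m : ℕ) (u v : Fin m → H),
    W.Δ h = ∑ i, x i ⊗ₜ[k] y i → W.Δ g = ∑ j, u j ⊗ₜ[k] v j →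
      ςbar (h ⊗ₜ[k] g) = ∑ i, ∑ j, ρ (x i * u j) 1 * ςbar (y i ⊗ₜ[k] v j)

/-- Condition (24). -/
def cond24 (W : WeakHopfData k H) (ρ : H →ₗ[k] A →ₗ[k] A) (ς ςbar : H ⊗[k] H → A) : Prop :=
  ∀ (h g : H) (n : ℕ) (x y : Fin n → H) (m : ℕ) (u v : Fin m → H),
    W.Δ h = ∑ i, x i ⊗ₜ[k] y i → W.Δ g = ∑ j, u j ⊗ₜ[k] v j →
      (∑ i, ∑ j, ς (x i ⊗ₜ[k] u j) * ςbar (y i ⊗ₜ[k] v j) = ρ (h * g) 1) ∧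
      (∑ i, ∑ j, ςbar (x i ⊗ₜ[k] u j) * ς (y i ⊗ₜ[k] v j) = ρ (h * g) 1)

/-- `σ` is `H^R`-balanced: `σ(hr,k) = σ(h,rk)` for `r ∈ H^R`. -/
def HRBalanced (W : WeakHopfData k H) (σ : H → H → A) : Prop :=
  ∀ (h g : H), ∀ r ∈ HR W, σ (h * r) g = σ h (r * g)

/-- `σbar` is `H^L`-balanced: `σbar(hl,k) = σbar(h,lk)` for `l ∈ H^L`. -/
def HLBalanced (W : WeakHopfData k H) (σbar : H → H → A) : Prop :=
  ∀ (h g : H), ∀ l ∈ HL W, σbar (h * l) g = σbar h (l * g)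

/-- The idempotent `∇ρ : A ⊗ H → A ⊗ H`, `a ⊗ h ↦ a(h⁽¹⁾·1_A) ⊗ h⁽²⁾`. -/
noncomputable def nabla (W : WeakHopfData k H) (ρ : H →ₗ[k] A →ₗ[k] A) :
    A ⊗[k] H →ₗ[k] A ⊗[k] H :=
  (LinearMap.rTensor H (LinearMap.mul' k A ∘ₗ LinearMap.lTensor A (ρ.flip 1))) ∘ₗ
    (TensorProduct.assoc k A H H).symm.toLinearMap ∘ₗ LinearMap.lTensor A W.Δ

/-- The subspace `N` of `A ⊗ H` spanned by the elements
`a(l·1_A) ⊗ h - a ⊗ lh` with `l ∈ H^L`, so that `(A ⊗ H)/N = A ⊗_{H^L} H`. -/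
def relN (W : WeakHopfData k H) (ρ : H →ₗ[k] A →ₗ[k] A) : Submodule k (A ⊗[k] H) :=
  Submodule.span k
    {z | ∃ (a : A) (l h : H), l ∈ HL W ∧ z = (a * ρ l 1) ⊗ₜ[k] h - a ⊗ₜ[k] (l * h)}

/-- The map `σ̃(h,k) := (h⁽¹⁾k⁽¹⁾·1_A)σ̄(h⁽²⁾,k⁽²⁾)`. -/
noncomputable def sigmaTilde (W : WeakHopfData k H) (ρ : H →ₗ[k] A →ₗ[k] A)
    (σbar : H →ₗ[k] H →ₗ[k] A) : H → H → A := fun h g =>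
  LinearMap.mul' k A
    ((TensorProduct.map ((ρ.flip 1) ∘ₗ LinearMap.mul' k H) (TensorProduct.lift σbar))
      ((TensorProduct.tensorTensorTensorComm k H H H H) (W.Δ h ⊗ₜ[k] W.Δ g)))

end
section Aux
set_option synthInstance.maxHeartbeats 400000
set_option maxHeartbeats 1000000

variable {k H A : Type*} [Field k] [Ring H] [Algebra k H] [Ring A] [Algebra k A]

open TensorProduct LinearMap Finset

lemma exists_rep (z : H ⊗[k] H) : ∃ (n : ℕ) (x y : Fin n → H), z = ∑ i, x i ⊗ₜ[k] y i := by
  obtain ⟨S, hS⟩ := TensorProduct.exists_finset z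
  refine ⟨S.card, fun i => ((S.equivFin.symm i : H × H)).1,
    fun i => ((S.equivFin.symm i : H × H)).2, ?_⟩
  rw [hS, ← Finset.sum_attach S (fun p => p.1 ⊗ₜ[k] p.2)]
  exact (Equiv.sum_comp S.equivFin.symm (fun p => (p : H × H).1 ⊗ₜ[k] (p : H × H).2)).symm

/-- contraction `a ⊗ (b ⊗ h) ↦ (ab) ⊗ h`. -/
noncomputable def auxM2 : A ⊗[k] (A ⊗[k] H) →ₗ[k] A ⊗[k] H :=
  (LinearMap.rTensor H (LinearMap.mul' k A)) ∘ₗ (TensorProduct.assoc k A A H).symm.toLinearMap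

@[simp] lemma auxM2_tmul (a b : A) (h : H) :
    auxM2 (a ⊗ₜ[k] (b ⊗ₜ[k] h)) = (a * b) ⊗ₜ[k] (h : H) := by
  simp [auxM2]

/-- 4-linear contraction map. -/
noncomputable def auxG4 (c : A) (f₁ f₂ f₃ : H →ₗ[k] A) (g : H →ₗ[k] H) :
    H ⊗[k] (H ⊗[k] (H ⊗[k] H)) →ₗ[k] A ⊗[k] H :=
  (LinearMap.rTensor H (LinearMap.mulLeft k c)) ∘ₗ auxM2 ∘ₗ (LinearMap.lTensor A auxM2) ∘ₗ
    TensorProduct.map f₁ (TensorProduct.map f₂ (TensorProduct.map f₃ g))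

@[simp] lemma auxG4_tmul (c : A) (f₁ f₂ f₃ : H →ₗ[k] A) (g : H →ₗ[k] H) (α β γ δ : H) :
    auxG4 c f₁ f₂ f₃ g (α ⊗ₜ[k] (β ⊗ₜ[k] (γ ⊗ₜ[k] δ))) =
      (c * f₁ α * f₂ β * f₃ γ) ⊗ₜ[k] g δ := by
  simp [auxG4, mul_assoc]

/-- 3-linear contraction map. -/
noncomputable def auxG3 (c : A) (f₁ f₂ : H →ₗ[k] A) (g : H →ₗ[k] H) :
    H ⊗[k] (H ⊗[k] H) →ₗ[k] A ⊗[k] H :=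
  (LinearMap.rTensor H (LinearMap.mulLeft k c)) ∘ₗ auxM2 ∘ₗ
    TensorProduct.map f₁ (TensorProduct.map f₂ g)

@[simp] lemma auxG3_tmul (c : A) (f₁ f₂ : H →ₗ[k] A) (g : H →ₗ[k] H) (α β γ : H) :
    auxG3 c f₁ f₂ g (α ⊗ₜ[k] (β ⊗ₜ[k] γ)) = (c * f₁ α * f₂ β) ⊗ₜ[k] g γ := by
  simp [auxG3, mul_assoc]

variable (W : WeakHopfData k H)

lemma nabla_tmul (ρ : H →ₗ[k] A →ₗ[k] A) (a : A) (h : H) {n : ℕ} {x y : Fin n → H}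
    (hrep : W.Δ h = ∑ i, x i ⊗ₜ[k] y i) :
    nabla W ρ (a ⊗ₜ[k] h) = ∑ i, (a * ρ (x i) 1) ⊗ₜ[k] y i := by
  simp only [nabla, LinearMap.coe_comp, Function.comp_apply, LinearEquiv.coe_coe,
    lTensor_tmul, hrep, tmul_sum, map_sum, TensorProduct.assoc_symm_tmul, rTensor_tmul,
    LinearMap.mul'_apply, LinearMap.flip_apply]

lemma piL_rep {m : ℕ} {u v : Fin m → H} (hone : W.Δ 1 = ∑ j, u j ⊗ₜ[k] v j) (w : H) :
    piL W w = ∑ j, W.ε (u j * w) • v j := by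
  simp [piL, hone]

lemma comul_mul_rep (hW : IsWeakHopf W) {a b : H} {n m : ℕ} {x y : Fin n → H}
    {u v : Fin m → H} (ha : W.Δ a = ∑ i, x i ⊗ₜ[k] y i) (hb : W.Δ b = ∑ j, u j ⊗ₜ[k] v j) :
    W.Δ (a * b) = ∑ i, ∑ j, (x i * u j) ⊗ₜ[k] (y i * v j) := by
  rw [hW.comul_mul, ha, hb, Finset.sum_mul_sum]
  simp [Algebra.TensorProduct.tmul_mul_tmul]

/-- two three-fold representations of `Δ²` agree. -/
lemma coassoc_reps (hW : IsWeakHopf W) (g : H) {n₁ n₂ : ℕ} {s t : Fin n₁ → H}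
    {nn ww : Fin n₂ → H}
    (hrep1 : W.Δ g = ∑ r, s r ⊗ₜ[k] t r) (hrep2 : W.Δ g = ∑ r, nn r ⊗ₜ[k] ww r)
    {me : Fin n₁ → ℕ} {e f : (r : Fin n₁) → Fin (me r) → H}
    (hef : ∀ r, W.Δ (t r) = ∑ w, e r w ⊗ₜ[k] f r w)
    {ms : Fin n₂ → ℕ} {s' e' : (r : Fin n₂) → Fin (ms r) → H}
    (hse : ∀ r, W.Δ (nn r) = ∑ w, s' r w ⊗ₜ[k] e' r w) :
    ∑ r, ∑ w, s' r w ⊗ₜ[k] (e' r w ⊗ₜ[k] ww r) =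
      ∑ r, ∑ w, s r ⊗ₜ[k] (e r w ⊗ₜ[k] f r w) := by
  have h := hW.coassoc g
  have hL : (TensorProduct.assoc k H H H) ((LinearMap.rTensor H W.Δ) (W.Δ g)) =
      ∑ r, ∑ w, s' r w ⊗ₜ[k] (e' r w ⊗ₜ[k] ww r) := by
    rw [hrep2]
    simp [hse, sum_tmul, tmul_sum]
  have hR : (LinearMap.lTensor H W.Δ) (W.Δ g) =
      ∑ r, ∑ w, s r ⊗ₜ[k] (e r w ⊗ₜ[k] f r w) := by
    rw [hrep1]
    simp [hef, tmul_sum]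
  rw [hL, hR] at h
  exact h

end Aux
section Aux2
set_option synthInstance.maxHeartbeats 400000
set_option maxHeartbeats 1000000

variable {k H A : Type*} [Field k] [Ring H] [Algebra k H] [Ring A] [Algebra k A]

open TensorProduct LinearMap Finset

variable (W : WeakHopfData k H)

lemma piL_mem (w : H) : piL W w ∈ HL W := ⟨w, rfl⟩

lemma mkQ_move (ρ : H →ₗ[k] A →ₗ[k] A) (h1 : cond1 W ρ) (a : A) (h' g : H) :
    (relN W ρ).mkQ ((a * ρ h' 1) ⊗ₜ[k] g) = (relN W ρ).mkQ (a ⊗ₜ[k] (piL W h' * g)) := by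
  rw [Submodule.mkQ_apply, Submodule.mkQ_apply, Submodule.Quotient.eq]
  refine Submodule.subset_span ⟨a, piL W h', g, piL_mem W h', ?_⟩
  rw [← h1 h']

lemma sum_piL (hW : IsWeakHopf W) {h : H} {n : ℕ} {x y : Fin n → H}
    (hrep : W.Δ h = ∑ i, x i ⊗ₜ[k] y i) :
    ∑ i, piL W (x i) * y i = h := by
  obtain ⟨m, u, v, hone⟩ := exists_rep (W.Δ (1 : H))
  have hΔ : W.Δ h = ∑ j, ∑ i, (u j * x i) ⊗ₜ[k] (v j * y i) := by
    have := comul_mul_rep W hW hone hrep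
    rwa [one_mul] at this
  have hc := hW.counit_left h
  rw [hΔ] at hc
  simp only [map_sum, rTensor_tmul, lid_tmul] at hc
  calc ∑ i, piL W (x i) * y i
      = ∑ i, ∑ j, W.ε (u j * x i) • (v j * y i) := by
        simp [piL_rep W hone, Finset.sum_mul, smul_mul_assoc]
    _ = ∑ j, ∑ i, W.ε (u j * x i) • (v j * y i) := Finset.sum_comm
    _ = h := hc

lemma mkQ_nabla_tmul (hW : IsWeakHopf W) (ρ : H →ₗ[k] A →ₗ[k] A) (h1 : cond1 W ρ)
    (a : A) (h : H) :
    (relN W ρ).mkQ (nabla W ρ (a ⊗ₜ[k] h)) = (relN W ρ).mkQ (a ⊗ₜ[k] h) := by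
  obtain ⟨n, x, y, hrep⟩ := exists_rep (W.Δ h)
  rw [nabla_tmul W ρ a h hrep, map_sum]
  calc ∑ i, (relN W ρ).mkQ ((a * ρ (x i) 1) ⊗ₜ[k] y i)
      = ∑ i, (relN W ρ).mkQ (a ⊗ₜ[k] (piL W (x i) * y i)) := by
        exact Finset.sum_congr rfl fun i _ => mkQ_move W ρ h1 a (x i) (y i)
    _ = (relN W ρ).mkQ (a ⊗ₜ[k] ∑ i, piL W (x i) * y i) := by
        rw [tmul_sum, map_sum]
    _ = (relN W ρ).mkQ (a ⊗ₜ[k] h) := by rw [sum_piL W hW hrep]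

lemma mkQ_nabla (hW : IsWeakHopf W) (ρ : H →ₗ[k] A →ₗ[k] A) (h1 : cond1 W ρ)
    (z : A ⊗[k] H) :
    (relN W ρ).mkQ (nabla W ρ z) = (relN W ρ).mkQ z := by
  have : (relN W ρ).mkQ ∘ₗ nabla W ρ = (relN W ρ).mkQ :=
    TensorProduct.ext' fun a h => mkQ_nabla_tmul W hW ρ h1 a h
  exact LinearMap.congr_fun this z

lemma comul_piL (hW : IsWeakHopf W) {m : ℕ} {u v : Fin m → H}
    (hone : W.Δ 1 = ∑ j, u j ⊗ₜ[k] v j) (w : H) :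
    W.Δ (piL W w) = ∑ j, (piL W w * u j) ⊗ₜ[k] v j := by
  have h := hW.weak_comul_one₁
  set Gw : H ⊗[k] (H ⊗[k] H) →ₗ[k] H ⊗[k] H :=
    (TensorProduct.lid k (H ⊗[k] H)).toLinearMap ∘ₗ
      rTensor (H ⊗[k] H) (W.ε ∘ₗ mulRight k w) with hGwdef
  have hGwt : ∀ (x : H) (t : H ⊗[k] H), Gw (x ⊗ₜ[k] t) = W.ε (x * w) • t := by
    intro x t; simp [hGwdef]
  have hL : Gw ((lTensor H W.Δ) (W.Δ 1)) = W.Δ (piL W w) := by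
    rw [hone]
    simp only [map_sum, lTensor_tmul, hGwt]
    rw [piL_rep W hone w, map_sum]
    exact Finset.sum_congr rfl fun j _ => by rw [map_smul]
  have hR : Gw ((TensorProduct.assoc k H H H) (W.Δ 1 ⊗ₜ[k] (1 : H)) * ((1 : H) ⊗ₜ[k] W.Δ 1)) =
      ∑ j, (piL W w * u j) ⊗ₜ[k] v j := by
    rw [hone, sum_tmul, tmul_sum, map_sum, Finset.sum_mul_sum]
    simp only [assoc_tmul, Algebra.TensorProduct.tmul_mul_tmul, mul_one, one_mul]
    rw [map_sum]
    simp only [map_sum, hGwt]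
    rw [Finset.sum_comm]
    refine Finset.sum_congr rfl fun j _ => ?_
    simp [piL_rep W hone w, Finset.sum_mul, sum_tmul, smul_mul_assoc, smul_tmul']
  rw [← hL, h, hR]

end Aux2
section Aux3
set_option synthInstance.maxHeartbeats 400000
set_option maxHeartbeats 1000000

variable {k H A : Type*} [Field k] [Ring H] [Algebra k H] [Ring A] [Algebra k A]

open TensorProduct LinearMap Finset

variable (W : WeakHopfData k H)

lemma comul_piL_mul (hW : IsWeakHopf W) (w h : H) {n : ℕ} {x y : Fin n → H}
    (hrep : W.Δ h = ∑ i, x i ⊗ₜ[k] y i) :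
    W.Δ (piL W w * h) = ∑ i, (piL W w * x i) ⊗ₜ[k] y i := by
  obtain ⟨m, u, v, hone⟩ := exists_rep (W.Δ (1 : H))
  have hl : W.Δ (piL W w) = (piL W w ⊗ₜ[k] (1 : H)) * W.Δ 1 := by
    rw [comul_piL W hW hone w, hone, Finset.mul_sum]
    simp [Algebra.TensorProduct.tmul_mul_tmul]
  rw [hW.comul_mul, hl, mul_assoc, ← hW.comul_mul, one_mul, hrep, Finset.mul_sum]
  simp [Algebra.TensorProduct.tmul_mul_tmul]

lemma nabla_idem_tmul (hW : IsWeakHopf W) (ρ : H →ₗ[k] A →ₗ[k] A) (h2 : cond2 W ρ)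
    (a : A) (h : H) :
    nabla W ρ (nabla W ρ (a ⊗ₜ[k] h)) = nabla W ρ (a ⊗ₜ[k] h) := by
  obtain ⟨n, x, y, hrep⟩ := exists_rep (W.Δ h)
  choose mu u v huv using fun i => exists_rep (W.Δ (y i))
  choose mp p q hpq using fun i => exists_rep (W.Δ (x i))
  have key := congrArg (auxG3 a (ρ.flip 1) (ρ.flip 1) (LinearMap.id (R := k) (M := H)))
    (coassoc_reps W hW h hrep hrep huv hpq)
  simp only [map_sum, auxG3_tmul, flip_apply, LinearMap.id_coe, id_eq] at key
  rw [nabla_tmul W ρ a h hrep, map_sum]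
  calc ∑ i, nabla W ρ ((a * ρ (x i) 1) ⊗ₜ[k] y i)
      = ∑ i, ∑ j, (a * ρ (x i) 1 * ρ (u i j) 1) ⊗ₜ[k] v i j := by
        exact Finset.sum_congr rfl fun i _ => nabla_tmul W ρ _ _ (huv i)
    _ = ∑ i, ∑ j, (a * ρ (p i j) 1 * ρ (q i j) 1) ⊗ₜ[k] y i := key.symm
    _ = ∑ i, (a * ρ (x i) 1) ⊗ₜ[k] y i := by
        refine Finset.sum_congr rfl fun i _ => ?_
        rw [← sum_tmul]
        congr 1
        calc ∑ j, a * ρ (p i j) 1 * ρ (q i j) 1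
            = a * ∑ j, ρ (p i j) 1 * ρ (q i j) 1 := by
              rw [Finset.mul_sum]; exact Finset.sum_congr rfl fun j _ => (mul_assoc _ _ _)
          _ = a * ρ (x i) 1 := by rw [← h2 (x i) 1 1 (mp i) (p i) (q i) (hpq i), mul_one]

lemma nabla_idem (hW : IsWeakHopf W) (ρ : H →ₗ[k] A →ₗ[k] A) (h2 : cond2 W ρ)
    (z : A ⊗[k] H) : nabla W ρ (nabla W ρ z) = nabla W ρ z := by
  have : (nabla W ρ) ∘ₗ (nabla W ρ) = nabla W ρ :=
    TensorProduct.ext' fun a h => nabla_idem_tmul W hW ρ h2 a h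
  exact LinearMap.congr_fun this z

lemma nabla_relN (hW : IsWeakHopf W) (ρ : H →ₗ[k] A →ₗ[k] A) (h3 : cond3 W ρ) :
    ∀ z ∈ relN W ρ, nabla W ρ z = 0 := by
  intro z hz
  have hle : relN W ρ ≤ LinearMap.ker (nabla W ρ) := by
    rw [relN, Submodule.span_le]
    rintro _ ⟨a, l, h, hl, rfl⟩
    obtain ⟨w, hw⟩ := id hl
    obtain ⟨n, x, y, hrep⟩ := exists_rep (W.Δ h)
    have hlh : W.Δ (l * h) = ∑ i, (l * x i) ⊗ₜ[k] y i := by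
      subst hw; exact comul_piL_mul W hW w h hrep
    simp only [SetLike.mem_coe, LinearMap.mem_ker, map_sub]
    rw [nabla_tmul W ρ _ _ hrep, nabla_tmul W ρ a (l * h) hlh, sub_eq_zero]
    refine Finset.sum_congr rfl fun i _ => ?_
    congr 1
    rw [mul_assoc, ← (h3 (x i) 1 l hl).2]
  exact hle hz

end Aux3
section Aux4
set_option synthInstance.maxHeartbeats 400000
set_option maxHeartbeats 1000000

variable {k H A : Type*} [Field k] [Ring H] [Algebra k H] [Ring A] [Algebra k A]

open TensorProduct LinearMap Finset

lemma sum_swap₃ {M : Type*} [AddCommMonoid M] {n np : ℕ} {mu : Fin n → ℕ}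
    (F : (i : Fin n) → Fin (mu i) → Fin np → M) :
    ∑ i, ∑ j, ∑ r, F i j r = ∑ r, ∑ i, ∑ j, F i j r :=
  calc ∑ i, ∑ j, ∑ r, F i j r
      = ∑ i, ∑ r, ∑ j, F i j r := Finset.sum_congr rfl fun i _ => Finset.sum_comm
    _ = ∑ r, ∑ i, ∑ j, F i j r := Finset.sum_comm

lemma sum_swap₄ {M : Type*} [AddCommMonoid M] {n np : ℕ} {mu : Fin n → ℕ}
    {mc : (i : Fin n) → Fin (mu i) → ℕ}
    (F : (i : Fin n) → (j : Fin (mu i)) → Fin (mc i j) → Fin np → M) :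
    ∑ i, ∑ j, ∑ q, ∑ r, F i j q r = ∑ r, ∑ i, ∑ j, ∑ q, F i j q r :=
  calc ∑ i, ∑ j, ∑ q, ∑ r, F i j q r
      = ∑ i, ∑ j, ∑ r, ∑ q, F i j q r :=
        Finset.sum_congr rfl fun i _ => Finset.sum_congr rfl fun j _ => Finset.sum_comm
    _ = ∑ r, ∑ i, ∑ j, ∑ q, F i j q r := sum_swap₃ _

variable (W : WeakHopfData k H)

lemma patternA (hW : IsWeakHopf W) {h : H} {n : ℕ} {x y : Fin n → H}
    (hrep : W.Δ h = ∑ i, x i ⊗ₜ[k] y i)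
    {mp : Fin n → ℕ} {p q : (i : Fin n) → Fin (mp i) → H}
    (hpq : ∀ i, W.Δ (x i) = ∑ m, p i m ⊗ₜ[k] q i m)
    {mu : Fin n → ℕ} {u v : (i : Fin n) → Fin (mu i) → H}
    (huv : ∀ i, W.Δ (y i) = ∑ j, u i j ⊗ₜ[k] v i j)
    {mc : (i : Fin n) → Fin (mu i) → ℕ}
    {c d : (i : Fin n) → (j : Fin (mu i)) → Fin (mc i j) → H}
    (hcd : ∀ i j, W.Δ (v i j) = ∑ q', c i j q' ⊗ₜ[k] d i j q') :
    ∑ i, ∑ m, ∑ j, p i m ⊗ₜ[k] (q i m ⊗ₜ[k] (u i j ⊗ₜ[k] v i j)) =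
      ∑ i, ∑ j, ∑ q', x i ⊗ₜ[k] (u i j ⊗ₜ[k] (c i j q' ⊗ₜ[k] d i j q')) := by
  have key := congrArg (LinearMap.lTensor H (LinearMap.lTensor H W.Δ))
    (coassoc_reps W hW h hrep hrep huv hpq)
  simp only [map_sum, lTensor_tmul, huv, hcd, tmul_sum] at key
  exact key

lemma patternB (hW : IsWeakHopf W) {n : ℕ} {y : Fin n → H} (x : Fin n → H)
    {mu : Fin n → ℕ} {u v : (i : Fin n) → Fin (mu i) → H}
    (huv : ∀ i, W.Δ (y i) = ∑ j, u i j ⊗ₜ[k] v i j)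
    {ma : (i : Fin n) → Fin (mu i) → ℕ}
    {α β : (i : Fin n) → (j : Fin (mu i)) → Fin (ma i j) → H}
    (hαβ : ∀ i j, W.Δ (u i j) = ∑ w, α i j w ⊗ₜ[k] β i j w)
    {mc : (i : Fin n) → Fin (mu i) → ℕ}
    {c d : (i : Fin n) → (j : Fin (mu i)) → Fin (mc i j) → H}
    (hcd : ∀ i j, W.Δ (v i j) = ∑ q', c i j q' ⊗ₜ[k] d i j q') :
    ∑ i, ∑ j, ∑ w, x i ⊗ₜ[k] (α i j w ⊗ₜ[k] (β i j w ⊗ₜ[k] v i j)) =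
      ∑ i, ∑ j, ∑ q', x i ⊗ₜ[k] (u i j ⊗ₜ[k] (c i j q' ⊗ₜ[k] d i j q')) := by
  refine Finset.sum_congr rfl fun i _ => ?_
  have inner := coassoc_reps W hW (y i) (huv i) (huv i) (hcd i) (hαβ i)
  have := congrArg (fun z => x i ⊗ₜ[k] z) inner
  simpa [tmul_sum] using this

lemma prodP1 (hW : IsWeakHopf W) (ρ : H →ₗ[k] A →ₗ[k] A) (σb : H →ₗ[k] H →ₗ[k] A)
    (h2 : cond2 W ρ)
    (μ : (A ⊗[k] H) ⊗[k] (A ⊗[k] H) →ₗ[k] A ⊗[k] H)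
    (hμ : ∀ (a b : A) (h g : H) (n : ℕ) (x y : Fin n → H),
        W.Δ h = ∑ i, x i ⊗ₜ[k] y i →
          ∀ (mm : Fin n → ℕ) (u v : (i : Fin n) → Fin (mm i) → H),
            (∀ i, W.Δ (y i) = ∑ j, u i j ⊗ₜ[k] v i j) →
              ∀ (p : ℕ) (s t : Fin p → H), W.Δ g = ∑ r, s r ⊗ₜ[k] t r →
                μ ((a ⊗ₜ[k] h) ⊗ₜ[k] (b ⊗ₜ[k] g)) =
                  ∑ i, ∑ j, ∑ r,
                    nabla W ρ ((a * ρ (x i) b * σb (u i j) (s r)) ⊗ₜ[k] (v i j * t r)))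
    (a b : A) (h g : H) :
    μ (nabla W ρ (a ⊗ₜ[k] h) ⊗ₜ[k] (b ⊗ₜ[k] g)) = μ ((a ⊗ₜ[k] h) ⊗ₜ[k] (b ⊗ₜ[k] g)) := by
  obtain ⟨n, x, y, hrep⟩ := exists_rep (W.Δ h)
  choose mu u v huv using fun i => exists_rep (W.Δ (y i))
  choose mp p q hpq using fun i => exists_rep (W.Δ (x i))
  choose mc c d hcd using fun i => fun j => exists_rep (W.Δ (v i j))
  obtain ⟨np, s, t, hg⟩ := exists_rep (W.Δ g)
  rw [hμ a b h g n x y hrep mu u v huv np s t hg]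
  rw [nabla_tmul W ρ a h hrep, sum_tmul, map_sum]
  calc ∑ i, μ (((a * ρ (x i) 1) ⊗ₜ[k] y i) ⊗ₜ[k] (b ⊗ₜ[k] g))
      = ∑ i, ∑ j, ∑ q', ∑ r, nabla W ρ
          ((a * ρ (x i) 1 * ρ (u i j) b * σb (c i j q') (s r)) ⊗ₜ[k] (d i j q' * t r)) := by
        refine Finset.sum_congr rfl fun i _ => ?_
        exact hμ (a * ρ (x i) 1) b (y i) g (mu i) (u i) (v i) (huv i) (mc i) (c i) (d i)
          (hcd i) np s t hg
    _ = ∑ r, ∑ i, ∑ j, ∑ q', nabla W ρ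
          ((a * ρ (x i) 1 * ρ (u i j) b * σb (c i j q') (s r)) ⊗ₜ[k] (d i j q' * t r)) :=
        sum_swap₄ _
    _ = ∑ r, ∑ i, ∑ m, ∑ j, nabla W ρ
          ((a * ρ (p i m) 1 * ρ (q i m) b * σb (u i j) (s r)) ⊗ₜ[k] (v i j * t r)) := by
        refine Finset.sum_congr rfl fun r _ => ?_
        have key := congrArg (auxG4 a (ρ.flip 1) (ρ.flip b) (σb.flip (s r))
          (LinearMap.mulRight k (t r))) (patternA W hW hrep hpq huv hcd)
        simp only [map_sum, auxG4_tmul, LinearMap.flip_apply,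
          LinearMap.mulRight_apply] at key
        have key2 := congrArg (nabla W ρ) key.symm
        simp only [map_sum] at key2
        exact key2
    _ = ∑ r, ∑ i, ∑ j, nabla W ρ
          ((a * ρ (x i) b * σb (u i j) (s r)) ⊗ₜ[k] (v i j * t r)) := by
        refine Finset.sum_congr rfl fun r _ => Finset.sum_congr rfl fun i _ => ?_
        rw [Finset.sum_comm]
        refine Finset.sum_congr rfl fun j _ => ?_
        have hX : (∑ m, a * ρ (p i m) 1 * ρ (q i m) b * σb (u i j) (s r)) =
            a * ρ (x i) b * σb (u i j) (s r) := by
          calc ∑ m, a * ρ (p i m) 1 * ρ (q i m) b * σb (u i j) (s r)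
              = (∑ m, a * (ρ (p i m) 1 * ρ (q i m) b)) * σb (u i j) (s r) := by
                rw [Finset.sum_mul]
                exact Finset.sum_congr rfl fun m _ => by rw [mul_assoc a]
            _ = a * ρ (x i) b * σb (u i j) (s r) := by
                rw [← Finset.mul_sum, ← h2 (x i) 1 b (mp i) (p i) (q i) (hpq i), one_mul]
        rw [← map_sum, ← sum_tmul, hX]
    _ = ∑ i, ∑ j, ∑ r, nabla W ρ
          ((a * ρ (x i) b * σb (u i j) (s r)) ⊗ₜ[k] (v i j * t r)) := (sum_swap₃ _).symm

end Aux4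
section Aux5
set_option synthInstance.maxHeartbeats 400000
set_option maxHeartbeats 1000000
set_option linter.unusedVariables false

variable {k H A : Type*} [Field k] [Ring H] [Algebra k H] [Ring A] [Algebra k A]

open TensorProduct LinearMap Finset

lemma sum_swap_blocks {M : Type*} [AddCommMonoid M] {np n : ℕ} {me : Fin np → ℕ}
    {mu : Fin n → ℕ} {ma : (i : Fin n) → Fin (mu i) → ℕ}
    (F : (r : Fin np) → Fin (me r) → (i : Fin n) → (j : Fin (mu i)) → Fin (ma i j) → M) :
    ∑ r, ∑ w, ∑ i, ∑ j, ∑ q, F r w i j q = ∑ i, ∑ j, ∑ q, ∑ r, ∑ w, F r w i j q :=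
  calc ∑ r, ∑ w, ∑ i, ∑ j, ∑ q, F r w i j q
      = ∑ r, ∑ i, ∑ j, ∑ q, ∑ w, F r w i j q :=
        Finset.sum_congr rfl fun r _ => (sum_swap₄ _).symm
    _ = ∑ i, ∑ j, ∑ q, ∑ r, ∑ w, F r w i j q := (sum_swap₄ _).symm

variable (W : WeakHopfData k H)

lemma nabla_tmul₂ (ρ : H →ₗ[k] A →ₗ[k] A) (a : A) (h : H) {n₁ n₂ : ℕ}
    {x y : Fin n₁ → Fin n₂ → H}
    (hrep : W.Δ h = ∑ i, ∑ j, x i j ⊗ₜ[k] y i j) :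
    nabla W ρ (a ⊗ₜ[k] h) = ∑ i, ∑ j, (a * ρ (x i j) 1) ⊗ₜ[k] y i j := by
  simp only [nabla, LinearMap.coe_comp, Function.comp_apply, LinearEquiv.coe_coe,
    lTensor_tmul, hrep, tmul_sum, map_sum, TensorProduct.assoc_symm_tmul, rTensor_tmul,
    LinearMap.mul'_apply, LinearMap.flip_apply]

lemma nabla_pull (ρ : H →ₗ[k] A →ₗ[k] A) (C : A) (Z : H) {n₁ : ℕ} {n₂ : Fin n₁ → ℕ}
    (T : (i : Fin n₁) → Fin (n₂ i) → A) :
    ∑ i, ∑ j, nabla W ρ ((C * T i j) ⊗ₜ[k] Z) =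
      nabla W ρ ((C * ∑ i, ∑ j, T i j) ⊗ₜ[k] Z) := by
  simp only [Finset.mul_sum, sum_tmul, map_sum]

lemma prodP2 (hW : IsWeakHopf W) (ρ : H →ₗ[k] A →ₗ[k] A) (σb : H →ₗ[k] H →ₗ[k] A)
    (h2 : cond2 W ρ) (h9 : cond9 W ρ (fun h g => σb h g))
    (μ : (A ⊗[k] H) ⊗[k] (A ⊗[k] H) →ₗ[k] A ⊗[k] H)
    (hμ : ∀ (a b : A) (h g : H) (n : ℕ) (x y : Fin n → H),
        W.Δ h = ∑ i, x i ⊗ₜ[k] y i →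
          ∀ (mm : Fin n → ℕ) (u v : (i : Fin n) → Fin (mm i) → H),
            (∀ i, W.Δ (y i) = ∑ j, u i j ⊗ₜ[k] v i j) →
              ∀ (p : ℕ) (s t : Fin p → H), W.Δ g = ∑ r, s r ⊗ₜ[k] t r →
                μ ((a ⊗ₜ[k] h) ⊗ₜ[k] (b ⊗ₜ[k] g)) =
                  ∑ i, ∑ j, ∑ r,
                    nabla W ρ ((a * ρ (x i) b * σb (u i j) (s r)) ⊗ₜ[k] (v i j * t r)))
    (a b : A) (h g : H) :
    μ ((a ⊗ₜ[k] h) ⊗ₜ[k] nabla W ρ (b ⊗ₜ[k] g)) = μ ((a ⊗ₜ[k] h) ⊗ₜ[k] (b ⊗ₜ[k] g)) := by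
  obtain ⟨n, x, y, hrep⟩ := exists_rep (W.Δ h)
  choose mu u v huv using fun i => exists_rep (W.Δ (y i))
  choose mp p q hpq using fun i => exists_rep (W.Δ (x i))
  choose ma α β hαβ using fun i => fun j => exists_rep (W.Δ (u i j))
  choose mc c d hcd using fun i => fun j => exists_rep (W.Δ (v i j))
  obtain ⟨np, s, t, hg⟩ := exists_rep (W.Δ g)
  choose me e f hef using fun r => exists_rep (W.Δ (t r))
  choose ms2 s2 e2 hs2 using fun r => exists_rep (W.Δ (s r))
  have Eg := coassoc_reps W hW g hg hg hef hs2
  have Eb := patternB W hW x huv hαβ hcd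
  have Eab := (patternA W hW hrep hpq huv hcd).trans Eb.symm
  rw [hμ a b h g n x y hrep mu u v huv np s t hg]
  rw [nabla_tmul W ρ b g hg, tmul_sum, map_sum]
  calc ∑ r, μ ((a ⊗ₜ[k] h) ⊗ₜ[k] ((b * ρ (s r) 1) ⊗ₜ[k] t r))
      = ∑ r, ∑ i, ∑ j, ∑ w, nabla W ρ
          ((a * ρ (x i) (b * ρ (s r) 1) * σb (u i j) (e r w)) ⊗ₜ[k] (v i j * f r w)) := by
        refine Finset.sum_congr rfl fun r _ => ?_
        exact hμ a (b * ρ (s r) 1) h (t r) n x y hrep mu u v huv (me r) (e r) (f r) (hef r)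
    _ = ∑ r, ∑ i, ∑ j, ∑ w, ∑ m, nabla W ρ
          ((a * ρ (p i m) b * ρ (q i m) (ρ (s r) 1) * σb (u i j) (e r w)) ⊗ₜ[k]
            (v i j * f r w)) := by
        refine Finset.sum_congr rfl fun r _ => Finset.sum_congr rfl fun i _ =>
          Finset.sum_congr rfl fun j _ => Finset.sum_congr rfl fun w _ => ?_
        rw [h2 (x i) b (ρ (s r) 1) (mp i) (p i) (q i) (hpq i)]
        simp only [Finset.mul_sum, Finset.sum_mul, sum_tmul, map_sum, mul_assoc]
    _ = ∑ r, ∑ i, ∑ j, ∑ m, ∑ w, nabla W ρ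
          ((a * ρ (p i m) b * ρ (q i m) (ρ (s r) 1) * σb (u i j) (e r w)) ⊗ₜ[k]
            (v i j * f r w)) := by
        exact Finset.sum_congr rfl fun r _ => Finset.sum_congr rfl fun i _ =>
          Finset.sum_congr rfl fun j _ => Finset.sum_comm
    _ = ∑ r, ∑ i, ∑ m, ∑ j, ∑ w, nabla W ρ
          ((a * ρ (p i m) b * ρ (q i m) (ρ (s r) 1) * σb (u i j) (e r w)) ⊗ₜ[k]
            (v i j * f r w)) := by
        exact Finset.sum_congr rfl fun r _ => Finset.sum_congr rfl fun i _ => Finset.sum_comm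
    _ = ∑ r, ∑ w, ∑ i, ∑ m, ∑ j, nabla W ρ
          ((a * ρ (p i m) b * ρ (q i m) (ρ (s r) 1) * σb (u i j) (e r w)) ⊗ₜ[k]
            (v i j * f r w)) := by
        exact Finset.sum_congr rfl fun r _ => sum_swap₄ _
    _ = ∑ r, ∑ w, ∑ i, ∑ j, ∑ w2, nabla W ρ
          ((a * ρ (x i) b * ρ (α i j w2) (ρ (s r) 1) * σb (β i j w2) (e r w)) ⊗ₜ[k]
            (v i j * f r w)) := by
        refine Finset.sum_congr rfl fun r _ => Finset.sum_congr rfl fun w _ => ?_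
        have key := congrArg (auxG4 a (ρ.flip b) (ρ.flip (ρ (s r) 1)) (σb.flip (e r w))
          (LinearMap.mulRight k (f r w))) Eab
        simp only [map_sum, auxG4_tmul, LinearMap.flip_apply,
          LinearMap.mulRight_apply] at key
        have key2 := congrArg (nabla W ρ) key
        simp only [map_sum] at key2
        exact key2
    _ = ∑ i, ∑ j, ∑ w2, ∑ r, ∑ w, nabla W ρ
          ((a * ρ (x i) b * ρ (α i j w2) (ρ (s r) 1) * σb (β i j w2) (e r w)) ⊗ₜ[k]
            (v i j * f r w)) := sum_swap_blocks _
    _ = ∑ i, ∑ j, ∑ w2, ∑ r, ∑ m2, nabla W ρ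
          ((a * ρ (x i) b * ρ (α i j w2) (ρ (s2 r m2) 1) * σb (β i j w2) (e2 r m2)) ⊗ₜ[k]
            (v i j * t r)) := by
        refine Finset.sum_congr rfl fun i _ => Finset.sum_congr rfl fun j _ =>
          Finset.sum_congr rfl fun w2 _ => ?_
        have key := congrArg (auxG3 (a * ρ (x i) b) (ρ (α i j w2) ∘ₗ ρ.flip 1)
          (σb (β i j w2)) (LinearMap.mulLeft k (v i j))) Eg.symm
        simp only [map_sum, auxG3_tmul, LinearMap.coe_comp, Function.comp_apply,
          LinearMap.flip_apply, LinearMap.mulLeft_apply] at key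
        have key2 := congrArg (nabla W ρ) key
        simp only [map_sum] at key2
        exact key2
    _ = ∑ i, ∑ j, ∑ r, ∑ w2, ∑ m2, nabla W ρ
          ((a * ρ (x i) b * ρ (α i j w2) (ρ (s2 r m2) 1) * σb (β i j w2) (e2 r m2)) ⊗ₜ[k]
            (v i j * t r)) := by
        exact Finset.sum_congr rfl fun i _ => Finset.sum_congr rfl fun j _ => Finset.sum_comm
    _ = ∑ i, ∑ j, ∑ r, ∑ w2, ∑ m2, nabla W ρ
          ((a * ρ (x i) b * σb (α i j w2) (s2 r m2) * ρ (β i j w2 * e2 r m2) 1) ⊗ₜ[k]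
            (v i j * t r)) := by
        refine Finset.sum_congr rfl fun i _ => Finset.sum_congr rfl fun j _ =>
          Finset.sum_congr rfl fun r _ => ?_
        have h9eq := h9 (u i j) (s r) 1 (ma i j) (α i j) (β i j) (ms2 r) (s2 r) (e2 r)
          (hαβ i j) (hs2 r)
        calc ∑ w2, ∑ m2, nabla W ρ
              ((a * ρ (x i) b * ρ (α i j w2) (ρ (s2 r m2) 1) * σb (β i j w2) (e2 r m2)) ⊗ₜ[k]
                (v i j * t r))
            = ∑ w2, ∑ m2, nabla W ρ
              (((a * ρ (x i) b) *
                (ρ (α i j w2) (ρ (s2 r m2) 1) * σb (β i j w2) (e2 r m2))) ⊗ₜ[k]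
                (v i j * t r)) := by
              simp only [mul_assoc]
          _ = nabla W ρ (((a * ρ (x i) b) *
                ∑ w2, ∑ m2, ρ (α i j w2) (ρ (s2 r m2) 1) * σb (β i j w2) (e2 r m2)) ⊗ₜ[k]
                (v i j * t r)) := nabla_pull W ρ _ _ _
          _ = nabla W ρ (((a * ρ (x i) b) *
                ∑ w2, ∑ m2, σb (α i j w2) (s2 r m2) * ρ (β i j w2 * e2 r m2) 1) ⊗ₜ[k]
                (v i j * t r)) := by rw [h9eq]
          _ = ∑ w2, ∑ m2, nabla W ρ
              ((a * ρ (x i) b * σb (α i j w2) (s2 r m2) * ρ (β i j w2 * e2 r m2) 1) ⊗ₜ[k]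
                (v i j * t r)) := by
              rw [← nabla_pull W ρ _ _ _]
              simp only [mul_assoc]
    _ = ∑ i, ∑ j, ∑ w2, ∑ r, ∑ m2, nabla W ρ
          ((a * ρ (x i) b * σb (α i j w2) (s2 r m2) * ρ (β i j w2 * e2 r m2) 1) ⊗ₜ[k]
            (v i j * t r)) := by
        exact Finset.sum_congr rfl fun i _ => Finset.sum_congr rfl fun j _ => Finset.sum_comm
    _ = ∑ r, ∑ m2, ∑ i, ∑ j, ∑ w2, nabla W ρ
          ((a * ρ (x i) b * σb (α i j w2) (s2 r m2) * ρ (β i j w2 * e2 r m2) 1) ⊗ₜ[k]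
            (v i j * t r)) := (sum_swap_blocks _).symm
    _ = ∑ r, ∑ m2, ∑ i, ∑ j, ∑ q', nabla W ρ
          ((a * ρ (x i) b * σb (u i j) (s2 r m2) * ρ (c i j q' * e2 r m2) 1) ⊗ₜ[k]
            (d i j q' * t r)) := by
        refine Finset.sum_congr rfl fun r _ => Finset.sum_congr rfl fun m2 _ => ?_
        have key := congrArg (auxG4 a (ρ.flip b) (σb.flip (s2 r m2))
          (ρ.flip 1 ∘ₗ LinearMap.mulRight k (e2 r m2)) (LinearMap.mulRight k (t r))) Eb
        simp only [map_sum, auxG4_tmul, LinearMap.coe_comp, Function.comp_apply,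
          LinearMap.flip_apply, LinearMap.mulRight_apply] at key
        have key2 := congrArg (nabla W ρ) key
        simp only [map_sum] at key2
        exact key2
    _ = ∑ i, ∑ j, ∑ q', ∑ r, ∑ m2, nabla W ρ
          ((a * ρ (x i) b * σb (u i j) (s2 r m2) * ρ (c i j q' * e2 r m2) 1) ⊗ₜ[k]
            (d i j q' * t r)) := sum_swap_blocks _
    _ = ∑ i, ∑ j, ∑ q', ∑ r, ∑ w, nabla W ρ
          ((a * ρ (x i) b * σb (u i j) (s r) * ρ (c i j q' * e r w) 1) ⊗ₜ[k]
            (d i j q' * f r w)) := by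
        refine Finset.sum_congr rfl fun i _ => Finset.sum_congr rfl fun j _ =>
          Finset.sum_congr rfl fun q' _ => ?_
        have key := congrArg (auxG3 (a * ρ (x i) b) (σb (u i j))
          (ρ.flip 1 ∘ₗ LinearMap.mulLeft k (c i j q')) (LinearMap.mulLeft k (d i j q'))) Eg
        simp only [map_sum, auxG3_tmul, LinearMap.coe_comp, Function.comp_apply,
          LinearMap.flip_apply, LinearMap.mulLeft_apply] at key
        have key2 := congrArg (nabla W ρ) key
        simp only [map_sum] at key2
        exact key2
    _ = ∑ i, ∑ j, ∑ r, ∑ q', ∑ w, nabla W ρ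
          ((a * ρ (x i) b * σb (u i j) (s r) * ρ (c i j q' * e r w) 1) ⊗ₜ[k]
            (d i j q' * f r w)) := by
        exact Finset.sum_congr rfl fun i _ => Finset.sum_congr rfl fun j _ => Finset.sum_comm
    _ = ∑ i, ∑ j, ∑ r, nabla W ρ
          ((a * ρ (x i) b * σb (u i j) (s r)) ⊗ₜ[k] (v i j * t r)) := by
        refine Finset.sum_congr rfl fun i _ => Finset.sum_congr rfl fun j _ =>
          Finset.sum_congr rfl fun r _ => ?_
        have hprod := comul_mul_rep W hW (hcd i j) (hef r)
        calc ∑ q', ∑ w, nabla W ρ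
              ((a * ρ (x i) b * σb (u i j) (s r) * ρ (c i j q' * e r w) 1) ⊗ₜ[k]
                (d i j q' * f r w))
            = nabla W ρ (∑ q', ∑ w,
                (a * ρ (x i) b * σb (u i j) (s r) * ρ (c i j q' * e r w) 1) ⊗ₜ[k]
                (d i j q' * f r w)) := by simp only [map_sum]
          _ = nabla W ρ (nabla W ρ
                ((a * ρ (x i) b * σb (u i j) (s r)) ⊗ₜ[k] (v i j * t r))) := by
              rw [nabla_tmul₂ W ρ (a * ρ (x i) b * σb (u i j) (s r)) (v i j * t r) hprod]
          _ = nabla W ρ ((a * ρ (x i) b * σb (u i j) (s r)) ⊗ₜ[k] (v i j * t r)) :=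
              nabla_idem W hW ρ h2 _

end Aux5
set_option synthInstance.maxHeartbeats 400000
set_option maxHeartbeats 1000000
set_option linter.unusedVariables false

/-- under conditions (1)–(10), for any `k`-linear map `μ`
realizing the weak crossed product multiplication on `A × H := im(∇ρ)`, the
restriction `ψ` of the canonical projection `π : A ⊗ H → Q := (A ⊗ H)/N` to
`A × H` is a `k`-linear bijection onto `Q` which sends the unit `∇ρ(1 ⊗ 1)` to
`π(1 ⊗ 1)`, carries the product `(a×h)(b×k)` to
`π(a(h⁽¹⁾·b)σ(h⁽²⁾,k⁽¹⁾) ⊗ h⁽³⁾k⁽²⁾)`, is left `A`-linear and right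
`H`-colinear. -/
theorem statement18 {k H A : Type*} [Field k] [Ring H] [Algebra k H] [Ring A] [Algebra k A]
    (W : WeakHopfData k H) (hW : IsWeakHopf W) (ρ : H →ₗ[k] A →ₗ[k] A)
    (σb : H →ₗ[k] H →ₗ[k] A) (hbal : HRBalanced W (fun h g => σb h g))
    (h1 : cond1 W ρ) (h2 : cond2 W ρ) (h3 : cond3 W ρ) (h4 : cond4 ρ)
    (h5 : cond5 W ρ (fun h g => σb h g)) (h6 : cond6 W ρ (fun h g => σb h g))
    (h7 : cond7 ρ (fun h g => σb h g)) (h8 : cond8 W ρ (fun h g => σb h g))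
    (h9 : cond9 W ρ (fun h g => σb h g)) (h10 : cond10 W ρ) :
    ∀ μ : (A ⊗[k] H) ⊗[k] (A ⊗[k] H) →ₗ[k] A ⊗[k] H,
      (∀ (a b : A) (h g : H) (n : ℕ) (x y : Fin n → H),
        W.Δ h = ∑ i, x i ⊗ₜ[k] y i →
          ∀ (mm : Fin n → ℕ) (u v : (i : Fin n) → Fin (mm i) → H),
            (∀ i, W.Δ (y i) = ∑ j, u i j ⊗ₜ[k] v i j) →
              ∀ (p : ℕ) (s t : Fin p → H), W.Δ g = ∑ r, s r ⊗ₜ[k] t r →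
                μ ((a ⊗ₜ[k] h) ⊗ₜ[k] (b ⊗ₜ[k] g)) =
                  ∑ i, ∑ j, ∑ r,
                    nabla W ρ ((a * ρ (x i) b * σb (u i j) (s r)) ⊗ₜ[k] (v i j * t r))) →
      -- ψ is a `k`-linear bijection from `A × H` onto `Q`
      (Function.Bijective ⇑((relN W ρ).mkQ ∘ₗ (LinearMap.range (nabla W ρ)).subtype)) ∧
      -- ψ respects the units
      ((relN W ρ).mkQ (nabla W ρ ((1 : A) ⊗ₜ[k] (1 : H))) =
        (relN W ρ).mkQ ((1 : A) ⊗ₜ[k] (1 : H))) ∧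
      -- ψ respects the products
      (∀ (a b : A) (h g : H) (n : ℕ) (x y : Fin n → H),
        W.Δ h = ∑ i, x i ⊗ₜ[k] y i →
          ∀ (mm : Fin n → ℕ) (u v : (i : Fin n) → Fin (mm i) → H),
            (∀ i, W.Δ (y i) = ∑ j, u i j ⊗ₜ[k] v i j) →
              ∀ (p : ℕ) (s t : Fin p → H), W.Δ g = ∑ r, s r ⊗ₜ[k] t r →
                (relN W ρ).mkQ (μ ((nabla W ρ (a ⊗ₜ[k] h)) ⊗ₜ[k] (nabla W ρ (b ⊗ₜ[k] g)))) =
                  ∑ i, ∑ j, ∑ r,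
                    (relN W ρ).mkQ
                      ((a * ρ (x i) b * σb (u i j) (s r)) ⊗ₜ[k] (v i j * t r))) ∧
      -- ψ is left A-linear
      (∀ (b a : A) (h : H) (n : ℕ) (x y : Fin n → H),
        W.Δ h = ∑ i, x i ⊗ₜ[k] y i →
          (relN W ρ).mkQ (nabla W ρ ((b * a) ⊗ₜ[k] h)) =
            ∑ i, (relN W ρ).mkQ ((b * a * ρ (x i) 1) ⊗ₜ[k] y i)) ∧
      -- ψ is right H-colinear
      (∀ (a : A) (h : H) (n : ℕ) (x y : Fin n → H),
        W.Δ h = ∑ i, x i ⊗ₜ[k] y i →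
          ∀ (mm : Fin n → ℕ) (u v : (i : Fin n) → Fin (mm i) → H),
            (∀ i, W.Δ (x i) = ∑ j, u i j ⊗ₜ[k] v i j) →
              ∑ i, ∑ j, ((relN W ρ).mkQ ((a * ρ (u i j) 1) ⊗ₜ[k] v i j)) ⊗ₜ[k] y i =
                ∑ i, ((relN W ρ).mkQ (nabla W ρ (a ⊗ₜ[k] x i))) ⊗ₜ[k] y i) := by
  intro μ hμ
  refine ⟨⟨?_, ?_⟩, ?_, ?_, ?_, ?_⟩
  · -- injectivity
    rintro ⟨z1, hz1⟩ ⟨z2, hz2⟩ heq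
    simp only [LinearMap.coe_comp, Function.comp_apply, Submodule.coe_subtype] at heq
    have hmem : z1 - z2 ∈ relN W ρ := by
      rw [← Submodule.Quotient.eq]
      exact heq
    have hzero : nabla W ρ (z1 - z2) = 0 := nabla_relN W hW ρ h3 _ hmem
    obtain ⟨w1, rfl⟩ := hz1
    obtain ⟨w2, rfl⟩ := hz2
    have : nabla W ρ w1 - nabla W ρ w2 = 0 := by
      have e1 : nabla W ρ (nabla W ρ w1) = nabla W ρ w1 := nabla_idem W hW ρ h2 w1
      have e2 : nabla W ρ (nabla W ρ w2) = nabla W ρ w2 := nabla_idem W hW ρ h2 w2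
      calc nabla W ρ w1 - nabla W ρ w2
          = nabla W ρ (nabla W ρ w1) - nabla W ρ (nabla W ρ w2) := by rw [e1, e2]
        _ = nabla W ρ (nabla W ρ w1 - nabla W ρ w2) := by rw [map_sub]
        _ = 0 := hzero
    exact Subtype.ext (sub_eq_zero.mp this)
  · -- surjectivity
    intro qq
    obtain ⟨z, rfl⟩ := Submodule.mkQ_surjective (relN W ρ) qq
    refine ⟨⟨nabla W ρ z, ⟨z, rfl⟩⟩, ?_⟩
    simp only [LinearMap.coe_comp, Function.comp_apply, Submodule.coe_subtype]
    exact mkQ_nabla W hW ρ h1 z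
  · -- units
    exact mkQ_nabla_tmul W hW ρ h1 1 1
  · -- products
    intro a b h g n x y hxy mm u v huv p s t hst
    have step1 : μ (nabla W ρ (a ⊗ₜ[k] h) ⊗ₜ[k] nabla W ρ (b ⊗ₜ[k] g)) =
        μ ((a ⊗ₜ[k] h) ⊗ₜ[k] (b ⊗ₜ[k] g)) := by
      calc μ (nabla W ρ (a ⊗ₜ[k] h) ⊗ₜ[k] nabla W ρ (b ⊗ₜ[k] g))
          = μ ((a ⊗ₜ[k] h) ⊗ₜ[k] nabla W ρ (b ⊗ₜ[k] g)) := by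
            rw [nabla_tmul W ρ b g hst, TensorProduct.tmul_sum, TensorProduct.tmul_sum,
              map_sum, map_sum]
            exact Finset.sum_congr rfl fun r _ =>
              prodP1 W hW ρ σb h2 μ hμ a (b * ρ (s r) 1) h (t r)
        _ = μ ((a ⊗ₜ[k] h) ⊗ₜ[k] (b ⊗ₜ[k] g)) := prodP2 W hW ρ σb h2 h9 μ hμ a b h g
    rw [step1, hμ a b h g n x y hxy mm u v huv p s t hst]
    simp only [map_sum]
    exact Finset.sum_congr rfl fun i _ => Finset.sum_congr rfl fun j _ =>
      Finset.sum_congr rfl fun r _ => mkQ_nabla W hW ρ h1 _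
  · -- left A-linearity
    intro b a h n x y hxy
    rw [nabla_tmul W ρ (b * a) h hxy, map_sum]
  · -- right H-colinearity
    intro a h n x y hxy mm u v huv
    refine Finset.sum_congr rfl fun i _ => ?_
    rw [nabla_tmul W ρ a (x i) (huv i), map_sum, TensorProduct.sum_tmul]
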